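/- arXiv:2002.02014 — 2 statements merged into one kernel-verified Lean document; each statement's English description precedes it below -/
import Mathlib

section
/- Domain inclusion (consequence of Lemma 5.2 used in the proof of Theorem 5.3): In the setting of Lemma 5.2, with C* the maximal safety controller for S_M=⟨S_i⟩^{M,𝓘} and safe set 𝔖=𝔖_1×…×𝔖_N, and C_i* the maximal safety controller for S_i and 𝔖_i for each i∈I, one has dom(C*) ⊆ dom(C_1*)×…×dom(C_N*). -/
open scoped NNReal

/-- A transition system `S = (X, X⁰, Uext, Uint, Δ, Y, H)`. The state, external input,
internal input and output sets are modeled as types; `init` is the set of initial states,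
`trans x uext uint` is the set of `(uext,uint)`-successors of `x`, and `out` is the output map. -/
structure TransSys (X Uext Uint Y : Type*) where
  init : Set X
  trans : X → Uext → Uint → Set X
  out : X → Y

/-- The set `U^a_S(x)` of enabled (admissible) input pairs at a state `x`. -/
def TransSys.enabled {X Uext Uint Y : Type*} (S : TransSys X Uext Uint Y) (x : X) :
    Set (Uext × Uint) :=
  {u | (S.trans x u.1 u.2).Nonempty}

/-- `R ⊆ X₁ × X₂` is an `(ε,μ)`-approximate simulation relation from `S₁` to `S₂`
(the outputs, external and internal inputs of the two systems lie in common
pseudometric spaces `Y`, `Uext`, `Uint`). -/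
def TransSys.ApproxSim {X₁ X₂ Uext Uint Y : Type*} [PseudoMetricSpace Y]
    [PseudoMetricSpace Uext] [PseudoMetricSpace Uint] (ε μ : ℝ)
    (S₁ : TransSys X₁ Uext Uint Y) (S₂ : TransSys X₂ Uext Uint Y)
    (R : Set (X₁ × X₂)) : Prop :=
  (∀ x₁ ∈ S₁.init, ∃ x₂ ∈ S₂.init, (x₁, x₂) ∈ R) ∧
  (∀ p ∈ R, dist (S₁.out p.1) (S₂.out p.2) ≤ ε) ∧
  (∀ p ∈ R, ∀ u₁ ∈ S₁.enabled p.1, ∀ x₁' ∈ S₁.trans p.1 u₁.1 u₁.2,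
    ∃ u₂ ∈ S₂.enabled p.2, max (dist u₁.1 u₂.1) (dist u₁.2 u₂.2) ≤ μ ∧
      ∃ x₂' ∈ S₂.trans p.2 u₂.1 u₂.2, (x₁', x₂') ∈ R)

/-- `R ⊆ X₁ × X₂` is an `(ε,μ)`-approximate alternating simulation relation
from `S₂` to `S₁`. -/
def TransSys.ApproxAltSim {X₁ X₂ Uext Uint Y : Type*} [PseudoMetricSpace Y]
    [PseudoMetricSpace Uext] [PseudoMetricSpace Uint] (ε μ : ℝ)
    (S₁ : TransSys X₁ Uext Uint Y) (S₂ : TransSys X₂ Uext Uint Y)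
    (R : Set (X₁ × X₂)) : Prop :=
  (∀ x₂ ∈ S₂.init, ∃ x₁ ∈ S₁.init, (x₁, x₂) ∈ R) ∧
  (∀ p ∈ R, dist (S₁.out p.1) (S₂.out p.2) ≤ ε) ∧
  (∀ p ∈ R, ∀ u₂ ∈ S₂.enabled p.2,
    ∃ u₁ ∈ S₁.enabled p.1, max (dist u₁.1 u₂.1) (dist u₁.2 u₂.2) ≤ μ ∧
      ∀ x₁' ∈ S₁.trans p.1 u₁.1 u₁.2,
        ∃ x₂' ∈ S₂.trans p.2 u₂.1 u₂.2, (x₁', x₂') ∈ R)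

/-- The controlled transition system `S|C` obtained from `S` and a memoryless
controller `C`: initial states are restricted to `dom(C)` and a transition is kept
iff its input pair is selected by `C`. -/
def TransSys.ctrl {X Uext Uint Y : Type*} (S : TransSys X Uext Uint Y)
    (C : X → Set (Uext × Uint)) : TransSys X Uext Uint Y where
  init := {x | x ∈ S.init ∧ (C x).Nonempty}
  trans := fun x ue ui => {x' | x' ∈ S.trans x ue ui ∧ (ue, ui) ∈ C x}
  out := S.out

/-- `C` is a safety controller for `S` and the safe set `Safe`:
`C(x) ⊆ U^a_S(x)`, `dom(C) ⊆ Safe`, and every successor under an input selected by `C`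
stays in `dom(C)`. -/
def TransSys.SafetyController {X Uext Uint Y : Type*} (S : TransSys X Uext Uint Y)
    (Safe : Set X) (C : X → Set (Uext × Uint)) : Prop :=
  (∀ x, C x ⊆ S.enabled x) ∧
  (∀ x, (C x).Nonempty → x ∈ Safe) ∧
  (∀ x, ∀ u ∈ C x, ∀ x' ∈ S.trans x u.1 u.2, (C x').Nonempty)

/-- `C` is the maximal safety controller for `S` and `Safe`. -/
def TransSys.MaximalSafetyController {X Uext Uint Y : Type*} (S : TransSys X Uext Uint Y)
    (Safe : Set X) (C : X → Set (Uext × Uint)) : Prop :=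
  S.SafetyController Safe C ∧
    ∀ C', S.SafetyController Safe C' → ∀ x, C' x ⊆ C x

/-- The collection `{Sᵢ}` (with internal input sets `Uset i ⊆ Wint i`, where `Wint i` is the
common pseudometric space containing both `Uᵢ^int` and the output tuples of the neighbours of
`i`, the latter embedded via `tup i`) is compatible for `M`-approximate composition:
for every tuple of neighbouring outputs there is an internal input within distance `M i`. -/
def Compatible {N : ℕ} {Wint Y : Fin N → Type*} [∀ i, PseudoMetricSpace (Wint i)]
    (Uset : ∀ i, Set (Wint i)) (tup : ∀ i, (∀ j, Y j) → Wint i)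
    (M : Fin N → ℝ≥0) : Prop :=
  ∀ i, ∀ y : ∀ j, Y j, ∃ u ∈ Uset i, dist u (tup i y) ≤ M i

/-- The `M`-approximate composed system `⟨Sᵢ⟩^{M,𝓘}`. It has no internal inputs
(modeled by `Unit`). A transition occurs iff every component `i` makes a transition under
some internal input `u ∈ Uset i` that is within distance `M i` of the tuple of outputs of
its neighbours. -/
def compose {N : ℕ} {X Uext Wint Y : Fin N → Type*} [∀ i, PseudoMetricSpace (Wint i)]
    (S : ∀ i, TransSys (X i) (Uext i) (Wint i) (Y i))
    (Uset : ∀ i, Set (Wint i)) (tup : ∀ i, (∀ j, Y j) → Wint i)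
    (M : Fin N → ℝ≥0) :
    TransSys (∀ i, X i) (∀ i, Uext i) Unit (∀ i, Y i) where
  init := {x | ∀ i, x i ∈ (S i).init}
  trans := fun x ue _ => {x' | ∀ i, ∃ u ∈ Uset i,
    dist u (tup i fun j => (S j).out (x j)) ≤ M i ∧
    (ue i, u) ∈ (S i).enabled (x i) ∧ x' i ∈ (S i).trans (x i) (ue i) u}
  out := fun x i => (S i).out (x i)

/-- Domain inclusion (consequence of Lemma 5.2): with `C*` the maximal safety controller for
the composed system `S_M` and `𝔖 = 𝔖₁ × … × 𝔖_N`, and `Cᵢ*` the maximal safety controller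
for `Sᵢ` and `𝔖ᵢ`, one has `dom(C*) ⊆ dom(C₁*) × … × dom(C_N*)`. -/
theorem dom_inclusion
 {N : ℕ} {X Uext Wint Y : Fin N → Type*}
    [∀ i, PseudoMetricSpace (Y i)] [∀ i, PseudoMetricSpace (Uext i)]
    [∀ i, PseudoMetricSpace (Wint i)]
    (Nbr : Fin N → Finset (Fin N)) (tup : ∀ i, (∀ j, Y j) → Wint i)
    (htup : ∀ i (y y' : ∀ j, Y j),
      dist (tup i y) (tup i y') = ↑((Nbr i).sup fun j => nndist (y j) (y' j)))
    (S : ∀ i, TransSys (X i) (Uext i) (Wint i) (Y i))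
    (Uset : ∀ i, Set (Wint i))
    (δi : Fin N → ℝ≥0)
    (hcompat : Compatible Uset tup δi)
    (Safe : ∀ i, Set (X i))
    (Ci : ∀ i, X i → Set (Uext i × Wint i))
    (hCi : ∀ i, (S i).MaximalSafetyController (Safe i) (Ci i))
    (Cstar : (∀ i, X i) → Set ((∀ i, Uext i) × Unit))
    (hCstar : (compose S Uset tup δi).MaximalSafetyController
      {x | ∀ i, x i ∈ Safe i} Cstar) :
    ∀ x : ∀ i, X i, (Cstar x).Nonempty → ∀ i, (Ci i (x i)).Nonempty := by
  classical
  intro x hx i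
  -- A safety controller for `S i` whose domain contains the `i`-projection of `dom(Cstar)`.
  let C' : X i → Set (Uext i × Wint i) := fun xi =>
    {p | ∃ xw : ∀ j, X j, xw i = xi ∧ ∃ ue : ∀ j, Uext j, (ue, ()) ∈ Cstar xw ∧
      p.1 = ue i ∧ p.2 ∈ Uset i ∧
      dist p.2 (tup i fun j => (S j).out (xw j)) ≤ δi i ∧
      (p.1, p.2) ∈ (S i).enabled xi}
  have hC' : (S i).SafetyController (Safe i) C' := by
    refine ⟨?_, ?_, ?_⟩
    · rintro xi p ⟨xw, hxi, ue, hue, hp1, hpU, hd, hen⟩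
      exact hen
    · rintro xi ⟨p, xw, hxi, ue, hue, -⟩
      have := hCstar.1.2.1 xw ⟨(ue, ()), hue⟩
      exact hxi ▸ this i
    · rintro xi p ⟨xw, hxi, ue, hue, hp1, hpU, hd, hen⟩ xi' hxi'
      -- (ue,()) is enabled in the composed system at xw
      obtain ⟨x0, hx0⟩ := hCstar.1.1 xw hue
      set x'' := Function.update x0 i xi' with hx''def
      have htrans : x'' ∈ (compose S Uset tup δi).trans xw ue () := by
        intro j
        by_cases hj : j = i
        · subst hj
          refine ⟨p.2, hpU, hd, ?_, ?_⟩
          · rw [hxi, ← hp1]; exact hen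
          · rw [hx''def, Function.update_self, hxi, ← hp1]; exact hxi'
        · obtain ⟨u, hu, hdu, heu, hsu⟩ := hx0 j
          refine ⟨u, hu, hdu, heu, ?_⟩
          rw [hx''def, Function.update_of_ne hj]; exact hsu
      obtain ⟨⟨ue2, ⟨⟩⟩, hue2⟩ := hCstar.1.2.2 xw (ue, ()) hue x'' htrans
      obtain ⟨x3, hx3⟩ := hCstar.1.1 x'' hue2
      obtain ⟨u', hu', hd', he', hs'⟩ := hx3 i
      refine ⟨(ue2 i, u'), x'', Function.update_self i xi' x0, ue2, hue2, rfl, hu', hd', ?_⟩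
      rw [← Function.update_self i xi' x0]; exact he'
  -- Maximality of Ci i
  obtain ⟨⟨ue, ⟨⟩⟩, hue⟩ := hx
  obtain ⟨x1, hx1⟩ := hCstar.1.1 x hue
  obtain ⟨u, hu, hd, he, hs⟩ := hx1 i
  have hmem : (ue i, u) ∈ C' (x i) := ⟨x, rfl, ue, hue, rfl, hu, hd, he⟩
  exact ⟨(ue i, u), (hCi i).2 C' hC' (x i) hmem⟩
end

section
/- Intermediate claim in the proof of Theorem 5.3: In the setting of Lemma 5.2, with C* the maximal safety controller for S_M=⟨S_i⟩^{M,𝓘} and safe set 𝔖=𝔖_1×…×𝔖_N, and C_i* the maximal safety controller for S_i and 𝔖_i for each i∈I, the diagonal relation R={(x,x̄)∈X_I×X_{C*} : x=x̄} is a (0,0)-approximate alternating simulation relation from S_M|C* to the composition of controlled components ⟨S_i|C_i*⟩^{M,𝓘}; in particular S_M|C* ≼_AS^{0,0} ⟨S_i|C_i*⟩^{M,𝓘}. -/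
open scoped NNReal

/-- The controller on component `i` derived from a controller `Cstar` on the composed
system: allow a pair `(ue_i, u)` at `xi` if there is a global state `x` with `x i = xi`
and a global external input `ue` selected by `Cstar` at `x`, such that `u` is an admissible
internal input for component `i` at `x` within distance `δi i` of the neighbours' outputs. -/
def derivedCtrl {N : ℕ} {X Uext Wint Y : Fin N → Type*} [∀ i, PseudoMetricSpace (Wint i)]
    (S : ∀ i, TransSys (X i) (Uext i) (Wint i) (Y i))
    (Uset : ∀ i, Set (Wint i)) (tup : ∀ i, (∀ j, Y j) → Wint i) (δi : Fin N → ℝ≥0)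
    (Cstar : (∀ i, X i) → Set ((∀ i, Uext i) × Unit)) (i : Fin N) (xi : X i) :
    Set (Uext i × Wint i) :=
  {p | ∃ x : ∀ j, X j, x i = xi ∧ ∃ ue : ∀ j, Uext j, ue i = p.1 ∧ (ue, ()) ∈ Cstar x ∧
    p.2 ∈ Uset i ∧ dist p.2 (tup i fun j => (S j).out (x j)) ≤ δi i ∧
    (p.1, p.2) ∈ (S i).enabled xi}

lemma derivedCtrl_mem {N : ℕ} {X Uext Wint Y : Fin N → Type*}
    [∀ i, PseudoMetricSpace (Wint i)]
    (S : ∀ i, TransSys (X i) (Uext i) (Wint i) (Y i))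
    (Uset : ∀ i, Set (Wint i)) (tup : ∀ i, (∀ j, Y j) → Wint i) (δi : Fin N → ℝ≥0)
    (Cstar : (∀ i, X i) → Set ((∀ i, Uext i) × Unit))
    (hCen : ∀ x, Cstar x ⊆ (compose S Uset tup δi).enabled x)
    {x : ∀ j, X j} {ue : ∀ j, Uext j} (h : (ue, ()) ∈ Cstar x) (i : Fin N) :
    ∃ u ∈ Uset i, dist u (tup i fun j => (S j).out (x j)) ≤ δi i ∧
      (ue i, u) ∈ derivedCtrl S Uset tup δi Cstar i (x i) := by
  obtain ⟨x', hx'⟩ := hCen x h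
  obtain ⟨u, huU, hdist, hen, _⟩ := hx' i
  exact ⟨u, huU, hdist, x, rfl, ue, rfl, h, huU, hdist, hen⟩

lemma derivedCtrl_safety {N : ℕ} {X Uext Wint Y : Fin N → Type*}
    [∀ i, PseudoMetricSpace (Wint i)]
    (S : ∀ i, TransSys (X i) (Uext i) (Wint i) (Y i))
    (Uset : ∀ i, Set (Wint i)) (tup : ∀ i, (∀ j, Y j) → Wint i) (δi : Fin N → ℝ≥0)
    (Safe : ∀ i, Set (X i))
    (Cstar : (∀ i, X i) → Set ((∀ i, Uext i) × Unit))
    (hCstar : (compose S Uset tup δi).SafetyController {x | ∀ i, x i ∈ Safe i} Cstar)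
    (i : Fin N) :
    (S i).SafetyController (Safe i) (derivedCtrl S Uset tup δi Cstar i) := by
  classical
  obtain ⟨hen, hsafe, hsucc⟩ := hCstar
  refine ⟨?_, ?_, ?_⟩
  · rintro xi p ⟨x, hx, ue, hue, hC, hU, hd, hpe⟩
    exact hpe
  · rintro xi ⟨p, x, hx, ue, hue, hC, _⟩
    have := hsafe x ⟨_, hC⟩ i
    rwa [hx] at this
  · rintro xi p ⟨x, hx, ue, hue, hC, hU, hd, hpe⟩ xi' hxi'
    -- build a global successor of `x` whose `i`-th component is `xi'`
    obtain ⟨x₀, hx₀⟩ := hen x hC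
    set x'' : ∀ j, X j := Function.update x₀ i xi' with hx''
    have htr : x'' ∈ (compose S Uset tup δi).trans x ue () := by
      intro j
      by_cases hji : j = i
      · subst hji
        refine ⟨p.2, hU, hd, ?_, ?_⟩
        · rw [hx, hue]; exact hpe
        · rw [hx'', Function.update_self, hx, hue]; exact hxi'
      · obtain ⟨u, huU, hud, hue', hutr⟩ := hx₀ j
        exact ⟨u, huU, hud, hue', by rwa [hx'', Function.update_of_ne hji]⟩
    have hC'' : (Cstar x'').Nonempty := hsucc x (ue, ()) hC x'' htr
    obtain ⟨⟨ue', v⟩, hue'C⟩ := hC''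
    have hv : v = () := rfl
    rw [hv] at hue'C
    obtain ⟨u', -, -, hmem⟩ := derivedCtrl_mem S Uset tup δi Cstar hen hue'C i
    refine ⟨(ue' i, u'), ?_⟩
    rwa [hx'', Function.update_self] at hmem

/-- Intermediate claim in the proof of Theorem 5.3: with `C*` the maximal safety controller
for the composed system `S_M` and `𝔖 = 𝔖₁ × … × 𝔖_N`, and `Cᵢ*` the maximal safety
controller for `Sᵢ` and `𝔖ᵢ`, the diagonal relation is a `(0,0)`-approximate alternating
simulation relation from `S_M|C*` to the composition of controlled components
`⟨Sᵢ|Cᵢ*⟩^{M,𝓘}`, i.e. `S_M|C* ≼_AS^{0,0} ⟨Sᵢ|Cᵢ*⟩^{M,𝓘}`. -/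
theorem controlled_composition_altsim
 {N : ℕ} {X Uext Wint Y : Fin N → Type*}
    [∀ i, PseudoMetricSpace (Y i)] [∀ i, PseudoMetricSpace (Uext i)]
    [∀ i, PseudoMetricSpace (Wint i)]
    (Nbr : Fin N → Finset (Fin N)) (tup : ∀ i, (∀ j, Y j) → Wint i)
    (htup : ∀ i (y y' : ∀ j, Y j),
      dist (tup i y) (tup i y') = ↑((Nbr i).sup fun j => nndist (y j) (y' j)))
    (S : ∀ i, TransSys (X i) (Uext i) (Wint i) (Y i))
    (Uset : ∀ i, Set (Wint i))
    (δi : Fin N → ℝ≥0)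
    (hcompat : Compatible Uset tup δi)
    (Safe : ∀ i, Set (X i))
    (Ci : ∀ i, X i → Set (Uext i × Wint i))
    (hCi : ∀ i, (S i).MaximalSafetyController (Safe i) (Ci i))
    (Cstar : (∀ i, X i) → Set ((∀ i, Uext i) × Unit))
    (hCstar : (compose S Uset tup δi).MaximalSafetyController
      {x | ∀ i, x i ∈ Safe i} Cstar) :
    TransSys.ApproxAltSim 0 0
      (compose (fun i => (S i).ctrl (Ci i)) Uset tup δi)
      ((compose S Uset tup δi).ctrl Cstar)
      {p : (∀ i, X i) × (∀ i, X i) | p.1 = p.2} := by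
  classical
  obtain ⟨hCsSC, hCsMax⟩ := hCstar
  obtain ⟨hen, hsafe, hsucc⟩ := hCsSC
  -- the derived component controllers are safety controllers, hence below `Ci i`
  have hDsub : ∀ i, ∀ xi, derivedCtrl S Uset tup δi Cstar i xi ⊆ Ci i xi := fun i =>
    (hCi i).2 _ (derivedCtrl_safety S Uset tup δi Safe Cstar ⟨hen, hsafe, hsucc⟩ i)
  refine ⟨?_, ?_, ?_⟩
  · -- initial states
    rintro x ⟨hxinit, ⟨⟨ue, v⟩, hC⟩⟩
    have hv : v = () := rfl; rw [hv] at hC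
    refine ⟨x, fun i => ⟨hxinit i, ?_⟩, rfl⟩
    obtain ⟨u, -, -, hmem⟩ := derivedCtrl_mem S Uset tup δi Cstar hen hC i
    exact ⟨(ue i, u), hDsub i _ hmem⟩
  · -- outputs
    rintro ⟨x₁, x₂⟩ (h : x₁ = x₂)
    subst h
    simp [compose, TransSys.ctrl]
  · -- alternating transition condition
    rintro ⟨x₁, x₂⟩ (h : x₁ = x₂) ⟨ue, v⟩ ⟨x', hx', hC⟩
    subst h
    have hv : v = () := rfl; rw [hv] at hC
    refine ⟨(ue, ()), ?_, by simp, ?_⟩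
    · -- enabled in the composition of controlled components
      have H : ∀ i, ∃ u ∈ Uset i, dist u (tup i fun j => (S j).out (x₁ j)) ≤ δi i ∧
          (ue i, u) ∈ Ci i (x₁ i) ∧ ((S i).trans (x₁ i) (ue i) u).Nonempty := by
        intro i
        obtain ⟨u, huU, hud, hmem⟩ := derivedCtrl_mem S Uset tup δi Cstar hen hC i
        have hmem' := hDsub i _ hmem
        exact ⟨u, huU, hud, hmem', ((hCi i).1).1 _ hmem'⟩
      choose u huU hud hmem htr using H
      choose z hz using htr
      exact ⟨z, fun i => ⟨u i, huU i, hud i, ⟨z i, hz i, hmem i⟩, hz i, hmem i⟩⟩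
    · -- every successor of the controlled composition is a successor of `S_M|C*`
      intro y hy
      refine ⟨y, ⟨fun i => ?_, hC⟩, rfl⟩
      obtain ⟨u, huU, hud, huen, hytr, huC⟩ := hy i
      exact ⟨u, huU, hud, ((hCi i).1).1 _ huC, hytr⟩
end
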